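/- arXiv:1506.00372 — 3 statements merged into one kernel-verified Lean document; each statement's English description precedes it below -/
import Mathlib

section
/- Let V be a finite-dimensional vector space over the field with two elements, equipped with a nondegenerate alternating bilinear form ⟨,⟩. For any symmetric bilinear form β on V that is even (β(x,x)=0 for all x), there exists a linear endomorphism F of V such that β(a,b) = ⟨a, F b⟩ + ⟨F a, b⟩ for all a, b. -/
/-!
Over `𝔽₂` an even form `β` is alternating, and an alternating form is `C - Cᵀ` for `C` its
strictly upper-triangular part in a basis. Identifying `V` with its dual through the
nondegenerate symmetric form `⟨,⟩`, the map `b ↦ C(·, b)` becomes an endomorphism `F` with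
`⟨F b, a⟩ = C(a, b)`, so `β(a, b) = ⟨a, F b⟩ - ⟨F a, b⟩`, and `-1 = 1` in `𝔽₂`.
-/

namespace LinearMap

theorem IsAlt.exists_eq_sub_flip {R M N ι : Type*} [CommRing R] [AddCommGroup M] [Module R M]
    [AddCommGroup N] [Module R N] [Fintype ι] [LinearOrder ι] (b : Module.Basis ι R M)
    {β : M →ₗ[R] M →ₗ[R] N} (hβ : β.IsAlt) : ∃ C : M →ₗ[R] M →ₗ[R] N, β = C - C.flip := by
  refine ⟨Matrix.toLinearMap₂ b b (.of fun i j => if i < j then β (b i) (b j) else 0),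
    ext_basis b b fun i j => ?_⟩
  simp only [sub_apply, flip_apply, Matrix.toLinearMap₂_apply_basis, Matrix.of_apply]
  rcases lt_trichotomy i j with h | rfl | h
  · simp [h, h.not_gt]
  · simp [hβ.self_eq_zero]
  · simp [h, h.not_gt, ← hβ.neg (b j) (b i)]

namespace BilinForm

theorem isSymm_of_isAlt {R M : Type*} [CommRing R] [CharP R 2] [AddCommGroup M] [Module R M]
    {B : LinearMap.BilinForm R M} (hB : LinearMap.IsAlt B) : B.IsSymm :=
  ⟨fun x y => by rw [← hB.neg, CharTwo.neg_eq]⟩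

theorem exists_eq_apply_sub_apply_of_isAlt {K V : Type*} [Field K] [AddCommGroup V]
    [Module K V] [FiniteDimensional K V] {B : LinearMap.BilinForm K V} (hB : B.Nondegenerate)
    (hB_symm : B.IsSymm) {β : LinearMap.BilinForm K V} (hβ : LinearMap.IsAlt β) :
    ∃ F : V →ₗ[K] V, ∀ a b, β a b = B a (F b) - B (F a) b := by
  obtain ⟨C, rfl⟩ := hβ.exists_eq_sub_flip (Module.finBasis K V)
  refine ⟨(B.toDual hB).symm.toLinearMap ∘ₗ C.flip, fun a b => ?_⟩
  simp [hB_symm.eq a]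

end BilinForm

end LinearMap

theorem stmt_0_general (V : Type*) [AddCommGroup V] [Module (ZMod 2) V]
    [FiniteDimensional (ZMod 2) V]
    (B : V →ₗ[ZMod 2] V →ₗ[ZMod 2] ZMod 2)
    (hB_nd : ∀ x : V, (∀ y : V, B x y = 0) → x = 0)
    (hB_alt : ∀ x : V, B x x = 0)
    (β : V →ₗ[ZMod 2] V →ₗ[ZMod 2] ZMod 2)
    (hβ_even : ∀ x : V, β x x = 0) :
    ∃ F : V →ₗ[ZMod 2] V, ∀ a b : V, β a b = B a (F b) + B (F a) b := by
  have hB_alt : LinearMap.IsAlt B := hB_alt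
  have hβ_alt : LinearMap.IsAlt β := hβ_even
  obtain ⟨F, hF⟩ := LinearMap.BilinForm.exists_eq_apply_sub_apply_of_isAlt
    (hB_alt.isRefl.nondegenerate_iff_separatingLeft.mpr hB_nd)
    (LinearMap.BilinForm.isSymm_of_isAlt hB_alt) hβ_alt
  exact ⟨F, fun a b => by rw [hF, CharTwo.sub_eq_add]⟩

/-- For a finite-dimensional `𝔽₂`-vector space with nondegenerate alternating form `B`,
every even symmetric bilinear form `β` can be written as `β a b = B a (F b) + B (F a) b`. -/
theorem stmt_0 (V : Type*) [AddCommGroup V] [Module (ZMod 2) V]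
    [FiniteDimensional (ZMod 2) V]
    (B : V →ₗ[ZMod 2] V →ₗ[ZMod 2] ZMod 2)
    (hB_nd : ∀ x : V, (∀ y : V, B x y = 0) → x = 0)
    (hB_alt : ∀ x : V, B x x = 0)
    (β : V →ₗ[ZMod 2] V →ₗ[ZMod 2] ZMod 2)
    (hβ_sym : ∀ a b : V, β a b = β b a)
    (hβ_even : ∀ x : V, β x x = 0) :
    ∃ F : V →ₗ[ZMod 2] V, ∀ a b : V, β a b = B a (F b) + B (F a) b :=
  stmt_0_general V B hB_nd hB_alt β hβ_even
end

section
/- Let V be a finite-dimensional vector space over 𝔽₂ with a nondegenerate alternating form ⟨,⟩. For every linear functional α : V → 𝔽₂ there exists a symmetric linear endomorphism F of V (i.e. ⟨Fx,y⟩ = ⟨x,Fy⟩ for all x,y) such that α(c) = ⟨F c, c⟩ for all c ∈ V. -/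
/-!
In characteristic two an alternating form is symmetric, hence nondegenerate, so `α = B v` for
some `v`. The rank-one map `F x = B v x • v` is then self-adjoint, and
`B (F c) c = (B v c)²`, which equals `B v c` because every element of `𝔽₂` is idempotent.
-/

namespace LinearMap

variable {R M : Type*} [CommRing R] [AddCommGroup M] [Module R M]

theorem IsAlt.isSymm_of_charTwo [CharP R 2] {B : M →ₗ[R] M →ₗ[R] R} (hB : B.IsAlt) :
    B.IsSymm :=
  ⟨fun x y => by rw [← hB.neg x y, CharTwo.neg_eq, RingHom.id_apply]⟩

theorem IsSymm.isSelfAdjoint_smulRight_self {B : M →ₗ[R] M →ₗ[R] R} (hB : B.IsSymm) (v : M) :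
    B.IsSelfAdjoint ((B v).smulRight v) := fun x y => by
  simp only [smulRight_apply, map_smul, smul_apply, smul_eq_mul, ← hB.eq v x, RingHom.id_apply]
  ring

end LinearMap

open LinearMap in
/-- For a finite-dimensional `𝔽₂`-vector space with nondegenerate alternating form `B`,
every linear functional `α` is of the form `α c = B (F c) c` for some symmetric endomorphism `F`. -/
theorem stmt_1 (V : Type*) [AddCommGroup V] [Module (ZMod 2) V]
    [FiniteDimensional (ZMod 2) V]
    (B : V →ₗ[ZMod 2] V →ₗ[ZMod 2] ZMod 2)
    (hB_nd : ∀ x : V, (∀ y : V, B x y = 0) → x = 0)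
    (hB_alt : ∀ x : V, B x x = 0)
    (α : V →ₗ[ZMod 2] ZMod 2) :
    ∃ F : V →ₗ[ZMod 2] V,
      (∀ x y : V, B (F x) y = B x (F y)) ∧ (∀ c : V, α c = B (F c) c) := by
  have hB_symm : B.IsSymm := IsAlt.isSymm_of_charTwo hB_alt
  have hB : B.Nondegenerate := hB_symm.isRefl.nondegenerate_iff_separatingLeft.2 hB_nd
  obtain ⟨v, rfl⟩ : ∃ v, B v = α :=
    ⟨(BilinForm.toDual B hB).symm α, ext fun c => BilinForm.apply_toDual_symm_apply α c⟩
  refine ⟨(B v).smulRight v, hB_symm.isSelfAdjoint_smulRight_self v, fun c => ?_⟩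
  rw [smulRight_apply, map_smul, LinearMap.smul_apply, smul_eq_mul, ← sq, ZMod.pow_card]
end

section
/- Let Λ be a finite-dimensional 𝔽₂-vector space with nondegenerate alternating form ω, and let c ∈ Λ be nonzero. For any a ∈ Λ with ω(a,c) = 0, there exists an even symmetric endomorphism F of Λ (i.e. ω(Fx,y)=ω(x,Fy) and ω(Fx,x)=0 for all x,y) with F c = a. Consequently, the orbit of (a, c) under the maps (a,c) ↦ (a + Fc, c), F even symmetric, contains (0, c). -/
/-- For a nondegenerate alternating form `ω` over `𝔽₂`, nonzero `c`, and `a` with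
`ω(a,c) = 0`, there is an even symmetric endomorphism `F` with `F c = a`. -/
theorem stmt_8 (Λ : Type*) [AddCommGroup Λ] [Module (ZMod 2) Λ]
    [FiniteDimensional (ZMod 2) Λ]
    (ω : Λ →ₗ[ZMod 2] Λ →ₗ[ZMod 2] ZMod 2)
    (hω_nd : ∀ x : Λ, (∀ y : Λ, ω x y = 0) → x = 0)
    (hω_alt : ∀ x : Λ, ω x x = 0)
    (c : Λ) (hc : c ≠ 0) (a : Λ) (ha : ω a c = 0) :
    ∃ F : Λ →ₗ[ZMod 2] Λ,
      (∀ x y : Λ, ω (F x) y = ω x (F y)) ∧ (∀ x : Λ, ω (F x) x = 0) ∧ F c = a := by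
  -- ω is symmetric since it is alternating (char 2)
  have hsym : ∀ x y : Λ, ω x y = ω y x := by
    intro x y
    have h := hω_alt (x + y)
    simp only [map_add, LinearMap.add_apply, hω_alt] at h
    have h2 : ∀ u v : ZMod 2, u + v = 0 → u = v := by decide
    apply h2
    linear_combination h
  -- every element of ZMod 2 is 0 or 1, and t + t = 0
  have hduo : ∀ t : ZMod 2, t ≠ 0 → t = 1 := by decide
  have hself : ∀ t : ZMod 2, t + t = 0 := by decide
  -- get c' with ω c c' = 1
  have : ∃ y, ω c y ≠ 0 := by
    by_contra h
    push_neg at h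
    exact hc (hω_nd c h)
  obtain ⟨c', hc'⟩ := this
  have hcc' : ω c c' = 1 := hduo _ hc'
  refine ⟨(ω a).smulRight c' + (ω c').smulRight a, ?_, ?_, ?_⟩
  · intro x y
    simp only [LinearMap.add_apply, LinearMap.smulRight_apply, map_add, map_smul, LinearMap.smul_apply,
      smul_eq_mul]
    rw [hsym c' y, hsym x c', hsym x a, hsym a y]
    ring
  · intro x
    simp only [LinearMap.add_apply, LinearMap.smulRight_apply, map_add, map_smul, LinearMap.smul_apply,
      smul_eq_mul]
    rw [mul_comm]
    exact hself _
  · simp only [LinearMap.add_apply, LinearMap.smulRight_apply, ha, hsym c' c, hcc',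
      zero_smul, one_smul, zero_add]
end
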